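/- Suppose Γ is a multitree, and w = (w_Γ, μ) is an admissible multidegree on (Γ, 𝐧) which is concentrated at a vertex v ∈ V(Γ) and satisfies w_Γ(v') ≥ 0 for all v' ≠ v. Then for every subset U ⊆ V(Γ) containing v whose induced subgraph Γ|_U (with vertex set U and all edges of Γ having both endpoints in U) is connected, the restriction of w to (Γ|_U, 𝐧|_U) — obtained by restricting w_Γ to U and μ to the edges of Γ|_U — is an admissible multidegree concentrated at v. -/

import Mathlib

open scoped Classical

namespace LLS

variable {V E : Type*}

/-- `σ(e,v)`: `1` if `v` is the tail of `e`, `-1` if `v` is the head of `e`, `0` otherwise. -/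
noncomputable def sigma (tail head : E → V) (e : E) (v : V) : ℤ :=
  if tail e = v then 1 else if head e = v then -1 else 0

/-- The endpoint of `e` other than `v` (for `e` adjacent to `v`). -/
noncomputable def otherEnd (tail head : E → V) (e : E) (v : V) : V :=
  if tail e = v then head e else tail e

/-- The multigraph is loopless. -/
def Loopless (tail head : E → V) : Prop := ∀ e, tail e ≠ head e

/-- The multigraph is connected. -/
def MGConnected (tail head : E → V) : Prop :=
  ∀ u v : V, Relation.ReflTransGen
    (fun a b => ∃ e, (tail e = a ∧ head e = b) ∨ (tail e = b ∧ head e = a)) u v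

/-- An admissible multidegree on `(Γ, 𝐧)`: a function `V(Γ) → ℤ` together with an
element `μ(e) ∈ ℤ/𝐧(e)ℤ` for each edge `e`. -/
structure AdmMD (V E : Type*) (n : E → ℕ) where
  wV : V → ℤ
  mu : ∀ e : E, ZMod (n e)

section FinGraph

variable [Fintype V] [Fintype E] [DecidableEq V] [DecidableEq E]

/-- The twist of an admissible multidegree at a vertex `v`. -/
noncomputable def twist (tail head : E → V) (n : E → ℕ) (w : AdmMD V E n) (v : V) :
    AdmMD V E n where
  wV u := w.wV u
    - (if u = v then ((Finset.univ.filter fun e : E =>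
        sigma tail head e v ≠ 0 ∧ w.mu e = 0).card : ℤ) else 0)
    + ((Finset.univ.filter fun e : E => sigma tail head e v ≠ 0 ∧
        w.mu e + (sigma tail head e v : ZMod (n e)) = 0 ∧
        otherEnd tail head e v = u).card : ℤ)
  mu e := w.mu e + (sigma tail head e v : ZMod (n e))

/-- The negative twist of an admissible multidegree at a vertex `v`
(the inverse of `twist`). -/
noncomputable def negTwist (tail head : E → V) (n : E → ℕ) (w : AdmMD V E n) (v : V) :
    AdmMD V E n where
  wV u := w.wV u
    + (if u = v then ((Finset.univ.filter fun e : E => sigma tail head e v ≠ 0 ∧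
        w.mu e - (sigma tail head e v : ZMod (n e)) = 0).card : ℤ) else 0)
    - ((Finset.univ.filter fun e : E => sigma tail head e v ≠ 0 ∧
        w.mu e = 0 ∧ otherEnd tail head e v = u).card : ℤ)
  mu e := w.mu e - (sigma tail head e v : ZMod (n e))

/-- An admissible multidegree is concentrated at `v` if there is an ordering of all
vertices starting with `v` such that composing the negative twists at all previous
vertices makes the multidegree negative at each subsequent vertex. -/
def Concentrated (tail head : E → V) (n : E → ℕ) (w : AdmMD V E n) (v : V) : Prop :=
  ∃ l : List V, l.Nodup ∧ (∀ x : V, x ∈ l) ∧ l.head? = some v ∧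
    ∀ (i : ℕ) (h : i < l.length), 0 < i →
      (((l.take i).foldl (negTwist tail head n) w).wV (l.get ⟨i, h⟩)) < 0

/-- `w` is obtained from `w₀` by a finite sequence of twists, i.e. `w ∈ V(G(w₀))`. -/
def TwistSeq (tail head : E → V) (n : E → ℕ) (w₀ w : AdmMD V E n) : Prop :=
  ∃ l : List V, l.foldl (twist tail head n) w₀ = w

/-- `l` records the successive twist vertices of a minimal path from `w` to `w'`
in `G(w₀)`. -/
def IsMinPath (tail head : E → V) (n : E → ℕ) (w w' : AdmMD V E n) (l : List V) : Prop :=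
  l.foldl (twist tail head n) w = w' ∧
    ∀ l' : List V, l'.foldl (twist tail head n) w = w' → l.length ≤ l'.length

/-- The membership condition describing the subgraph `Ḡ(w₀)` of `G(w₀)`:
no minimal path from `w` to `w_v` involves twisting at `v`. -/
def InBarG (tail head : E → V) (n : E → ℕ) (w₀ : AdmMD V E n) (wv : V → AdmMD V E n)
    (w : AdmMD V E n) : Prop :=
  TwistSeq tail head n w₀ w ∧
    ∀ (v : V) (l : List V), IsMinPath tail head n w (wv v) l → v ∉ l

/-- Edges joining `v` and `u`. -/
noncomputable def edgesBetween (tail head : E → V) (v u : V) : Finset E :=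
  Finset.univ.filter fun e => (tail e = v ∧ head e = u) ∨ (head e = v ∧ tail e = u)

/-- Edges adjacent to `v`. -/
noncomputable def edgesAdj (tail head : E → V) (v : V) : Finset E :=
  Finset.univ.filter fun e => tail e = v ∨ head e = v

/-- The change of a divisor effected by a single chip-firing move at `v`. -/
noncomputable def fireDelta (tail head : E → V) (v : V) : V → ℤ := fun u =>
  ((edgesBetween tail head v u).card : ℤ)
    - (if u = v then ((edgesAdj tail head v).card : ℤ) else 0)

/-- A chip-firing move (twist) at `v`. -/
noncomputable def chipFire (tail head : E → V) (D : V → ℤ) (v : V) : V → ℤ :=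
  fun u => D u + fireDelta tail head v u

/-- The inverse of a chip-firing move at `v`. -/
noncomputable def negChipFire (tail head : E → V) (D : V → ℤ) (v : V) : V → ℤ :=
  fun u => D u - fireDelta tail head v u

/-- A divisor (multidegree) on a graph is concentrated at `v`. -/
def ConcentratedDiv (tail head : E → V) (D : V → ℤ) (v : V) : Prop :=
  ∃ l : List V, l.Nodup ∧ (∀ x : V, x ∈ l) ∧ l.head? = some v ∧
    ∀ (i : ℕ) (h : i < l.length), 0 < i →
      (((l.take i).foldl (negChipFire tail head) D) (l.get ⟨i, h⟩)) < 0

/-- A divisor on a graph is `v₀`-reduced. -/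
def VReduced (tail head : E → V) (D : V → ℤ) (v₀ : V) : Prop :=
  (∀ u, u ≠ v₀ → 0 ≤ D u) ∧
    ∀ S : Finset V, S.Nonempty → v₀ ∉ S →
      ∃ v ∈ S, D v < ((Finset.univ.filter fun e : E =>
        (tail e = v ∧ head e ∉ S) ∨ (head e = v ∧ tail e ∉ S)).card : ℤ)

/-- The function `D_{w,v}` on edges of `Γ` determined by a path `l` from `w` to `w_v`. -/
noncomputable def DFun (tail head : E → V) (n : E → ℕ) (w : AdmMD V E n) (l : List V)
    (v : V) (et : E) : ℤ :=
  (((Finset.univ : Finset (Fin l.length)).filter fun j =>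
      l.get j = otherEnd tail head et v ∧
        ((l.take (j.val + 1)).foldl (twist tail head n) w).mu et = 0).card : ℤ)
  - (((Finset.univ : Finset (Fin l.length)).filter fun j =>
      l.get j = v ∧ ((l.take j.val).foldl (twist tail head n) w).mu et = 0).card : ℤ)

end FinGraph

/-- The tail map of the subdivided graph `Γ̃`: the edge `e` of `Γ` is subdivided into
`𝐧(e)` edges `(e, j)`, `j = 0, …, 𝐧(e) - 1`, numbered from the tail of `e`; the new
vertices over `e` are `(e, i)`, `i = 0, …, 𝐧(e) - 2`, with `(e, i)` being the
`(i+1)`-st new vertex from the tail of `e`. -/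
def tailT (tail head : E → V) (n : E → ℕ) :
    (Σ e : E, Fin (n e)) → V ⊕ Σ e : E, Fin (n e - 1) := fun p =>
  if h : p.2.val = 0 then Sum.inl (tail p.1)
  else Sum.inr ⟨p.1, ⟨p.2.val - 1, by have := p.2.isLt; omega⟩⟩

/-- The head map of the subdivided graph `Γ̃`. -/
def headT (tail head : E → V) (n : E → ℕ) :
    (Σ e : E, Fin (n e)) → V ⊕ Σ e : E, Fin (n e - 1) := fun p =>
  if h : p.2.val = n p.1 - 1 then Sum.inl (head p.1)
  else Sum.inr ⟨p.1, ⟨p.2.val, by have := p.2.isLt; omega⟩⟩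

/-- The multidegree on the subdivided graph `Γ̃` induced by an admissible multidegree:
it agrees with `w` on old vertices, is `1` on the `μ(e)`-th new vertex over `e`
when `μ(e) ≠ 0`, and is `0` on all other new vertices. -/
noncomputable def inducedMD (n : E → ℕ) (w : AdmMD V E n) :
    (V ⊕ Σ e : E, Fin (n e - 1)) → ℤ
  | Sum.inl v => w.wV v
  | Sum.inr ⟨e, i⟩ => if (w.mu e).val = i.val + 1 then 1 else 0

/-- The simple graph `Γ̄` associated to the multigraph `Γ`: same vertices, one edge
between each pair of adjacent vertices. -/
def barGraph (tail head : E → V) : SimpleGraph V where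
  Adj u v := u ≠ v ∧ ∃ e, (tail e = u ∧ head e = v) ∨ (tail e = v ∧ head e = u)
  symm := by
    constructor
    intro u v h
    exact ⟨h.1.symm, h.2.imp fun e he => he.symm⟩
  loopless := ⟨fun u h => h.1 rfl⟩

end LLS

/-!
Negatively twisting the distinct vertices listed before a vertex `u` lowers the degree of `u` by
the number of edges from them to `u` on which `μ` vanishes, so concentration only depends on
these counts. As `w` is nonnegative away from `v`, each vertex `u ≠ v` of a concentrating order
has such an edge to an earlier vertex; following these edges gives a path from any `x` to `v`
through vertices not later than `x`. If `x ∉ U` came before `u ∈ U` and were joined to `u`, this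
path and the edge `xu` followed by a path inside `U` would be two paths from `x` to `v` in the
tree `Γ̄`. Hence the vertices outside `U` do not affect the degrees of the vertices of `U`, and
the order restricted to `U` still witnesses concentration.
-/

namespace List

variable {α : Type*}

theorem sum_map_filter_of_eq_zero {M : Type*} [AddMonoid M] (p : α → Bool) (f : α → M)
    (l : List α) (h : ∀ x ∈ l, p x = false → f x = 0) :
    ((l.filter p).map f).sum = (l.map f).sum := by
  induction l with
  | nil => rfl
  | cons a t ih =>
    rw [forall_mem_cons] at h
    cases hp : p a <;> simp [hp, h.1, ih h.2]

theorem exists_getElem_eq_and_take_filter (p : α → Bool) (l : List α) {i : ℕ}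
    (hi : i < (l.filter p).length) :
    ∃ j, ∃ hj : j < l.length,
      l[j] = (l.filter p)[i] ∧ (l.filter p).take i = (l.take j).filter p := by
  induction l generalizing i with
  | nil => simp at hi
  | cons a t ih =>
    cases hp : p a
    · simp only [filter_cons, hp] at hi ⊢
      obtain ⟨j, hj, hget, htake⟩ := ih hi
      exact ⟨j + 1, by simpa using hj, by simpa using hget, by simpa [hp] using htake⟩
    · cases i with
      | zero => exact ⟨0, by simp, by simp [hp], by simp⟩
      | succ i =>
        simp only [filter_cons, hp, if_true, length_cons] at hi ⊢
        obtain ⟨j, hj, hget, htake⟩ := ih (i := i) (by omega)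
        exact ⟨j + 1, by simpa using hj, by simpa using hget, by simp [hp, htake]⟩

theorem Nodup.exists_subtype_map_val_eq_filter {p : α → Prop} [DecidablePred p] {l : List α}
    (hnd : l.Nodup) (hall : ∀ x, x ∈ l) {v : α} (hhead : l.head? = some v) (hv : p v) :
    ∃ l' : List {x // p x}, l'.map Subtype.val = l.filter (p ·) ∧ l'.Nodup ∧ (∀ x, x ∈ l') ∧
      l'.head? = some ⟨v, hv⟩ := by
  let l' : List {x // p x} :=
    (l.filter (p ·)).pmap Subtype.mk fun x hx => of_decide_eq_true (mem_filter.1 hx).2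
  have hl' : l'.map Subtype.val = l.filter (p ·) := by simp [l', map_pmap]
  refine ⟨l', hl', Nodup.of_map _ (hl' ▸ hnd.filter _), fun x => ?_, ?_⟩
  · simpa [← mem_map_of_injective Subtype.val_injective, hl'] using ⟨hall x, x.2⟩
  · obtain ⟨t, rfl⟩ := head?_eq_some_iff.1 hhead
    have : (l'.map Subtype.val).head? = some v := by simp [hl', hv]
    rw [head?_map, Option.map_eq_some_iff] at this
    obtain ⟨a, ha, hav⟩ := this
    rw [ha, show a = ⟨v, hv⟩ from Subtype.ext hav]

end List

namespace SimpleGraph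

variable {V : Type*} {G : SimpleGraph V} {r : V → ℕ} {v : V}

theorem exists_walk_forall_le_of_exists_adj_lt (hr : ∀ y, y ≠ v → ∃ z, G.Adj y z ∧ r z < r y)
    (y : V) : ∃ p : G.Walk y v, ∀ z ∈ p.support, r z ≤ r y := by
  induction hy : r y using Nat.strong_induction_on generalizing y with
  | _ k ih =>
    by_cases hyv : y = v
    · subst hyv
      exact ⟨.nil, by simp [hy]⟩
    obtain ⟨z, hyz, hzy⟩ := hr y hyv
    obtain ⟨p, hp⟩ := ih (r z) (hy ▸ hzy) z rfl
    refine ⟨.cons hyz p, fun x hx => ?_⟩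
    rw [Walk.support_cons, List.mem_cons] at hx
    rcases hx with rfl | hx
    · exact hy.le
    · exact (hp x hx).trans (hy ▸ hzy).le

theorem IsAcyclic.not_adj_of_lt (hG : G.IsAcyclic) (hr : ∀ y, y ≠ v → ∃ z, G.Adj y z ∧ r z < r y)
    {U : Set V} (hU : ∀ u ∈ U, ∃ p : G.Walk u v, ∀ z ∈ p.support, z ∈ U) {x u : V}
    (hx : x ∉ U) (hu : u ∈ U) (hxu : r x < r u) : ¬ G.Adj x u := by
  intro hadj
  obtain ⟨p, hp⟩ := exists_walk_forall_le_of_exists_adj_lt hr x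
  obtain ⟨q, hq⟩ := hU u hu
  have hxq : x ∉ q.bypass.support := fun h => hx (hq x (q.support_bypass_subset_support h))
  have hpaths := (hG.subsingleton_path x v).elim ⟨p.bypass, p.bypass_isPath⟩
    ⟨.cons hadj q.bypass, q.bypass_isPath.cons hxq⟩
  have hup : u ∈ p.support := by
    apply p.support_bypass_subset_support
    rw [congrArg (fun p : G.Path x v => p.1.support) hpaths]
    simp
  exact absurd (hp u hup) (not_le.2 hxu)

end SimpleGraph

namespace LLS

variable {V E : Type*}

theorem joins_of_otherEnd_eq {tail head : E → V} {e : E} {x u : V}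
    (hs : sigma tail head e x ≠ 0) (ho : otherEnd tail head e x = u) :
    (tail e = x ∧ head e = u) ∨ (tail e = u ∧ head e = x) := by
  unfold sigma otherEnd at *
  split_ifs at hs ho with ht hh
  · exact Or.inl ⟨ht, ho⟩
  · exact Or.inr ⟨ho, hh⟩
  · exact absurd rfl hs

theorem sigma_eq_zero_of_ne {tail head : E → V} {e : E} {x : V} (ht : tail e ≠ x)
    (hh : head e ≠ x) : sigma tail head e x = 0 := by
  simp [sigma, ht, hh]

theorem barGraph_adj_of_joins {tail head : E → V} (hloop : Loopless tail head) {e : E} {a b : V}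
    (h : (tail e = a ∧ head e = b) ∨ (tail e = b ∧ head e = a)) : (barGraph tail head).Adj a b := by
  refine ⟨?_, e, h⟩
  rintro rfl
  rcases h with ⟨ht, hh⟩ | ⟨ht, hh⟩ <;> exact hloop e (ht.trans hh.symm)

section Induced

variable (tail head : E → V) (U : Finset V) {n : E → ℕ}

def inducedTail : {e : E // tail e ∈ U ∧ head e ∈ U} → U := fun e => ⟨tail e.1, e.2.1⟩

def inducedHead : {e : E // tail e ∈ U ∧ head e ∈ U} → U := fun e => ⟨head e.1, e.2.2⟩

def AdmMD.restrict (w : AdmMD V E n) :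
    AdmMD U {e : E // tail e ∈ U ∧ head e ∈ U} (fun e => n e.1) :=
  ⟨fun u => w.wV u.1, fun e => w.mu e.1⟩

variable {tail head U}

theorem sigma_induced (e : {e : E // tail e ∈ U ∧ head e ∈ U}) (x : U) :
    sigma (inducedTail tail head U) (inducedHead tail head U) e x = sigma tail head e.1 x.1 := by
  unfold sigma
  simp only [inducedTail, inducedHead, Subtype.ext_iff]

theorem otherEnd_induced (e : {e : E // tail e ∈ U ∧ head e ∈ U}) (x : U) :
    (otherEnd (inducedTail tail head U) (inducedHead tail head U) e x).1
      = otherEnd tail head e.1 x.1 := by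
  unfold otherEnd
  split_ifs <;> simp_all [inducedTail, inducedHead, Subtype.ext_iff]

theorem exists_walk_of_mgConnected_induced (hloop : Loopless tail head)
    (hU : MGConnected (inducedTail tail head U) (inducedHead tail head U)) (a b : U) :
    ∃ p : (barGraph tail head).Walk a b, ∀ z ∈ p.support, z ∈ U := by
  induction hU a b with
  | refl => exact ⟨.nil, by simp⟩
  | @tail c d _ hcd ih =>
    obtain ⟨p, hp⟩ := ih
    obtain ⟨e, he⟩ := hcd
    have hadj : (barGraph tail head).Adj c d := barGraph_adj_of_joins hloop (e := e.1) (by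
      simpa [inducedTail, inducedHead, Subtype.ext_iff] using he)
    refine ⟨p.concat hadj, fun z hz => ?_⟩
    rw [SimpleGraph.Walk.support_concat, List.mem_append, List.mem_singleton] at hz
    rcases hz with hz | rfl
    exacts [hp z hz, d.2]

end Induced

section Multidegree

variable [Fintype E] [DecidableEq V] {tail head : E → V} {n : E → ℕ}

variable (tail head n) in
noncomputable def numZeroEdges (w : AdmMD V E n) (x u : V) : ℕ :=
  (Finset.univ.filter fun e : E => sigma tail head e x ≠ 0 ∧ w.mu e = 0 ∧
    otherEnd tail head e x = u).card

theorem barGraph_adj_of_numZeroEdges_pos (hloop : Loopless tail head) {w : AdmMD V E n} {x u : V}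
    (h : 0 < numZeroEdges tail head n w x u) : (barGraph tail head).Adj x u := by
  obtain ⟨e, he⟩ := Finset.card_pos.1 h
  simp only [Finset.mem_filter, Finset.mem_univ, true_and] at he
  exact barGraph_adj_of_joins hloop (joins_of_otherEnd_eq he.1 he.2.2)

theorem negTwist_wV_of_ne (w : AdmMD V E n) {x u : V} (hux : u ≠ x) :
    (negTwist tail head n w x).wV u = w.wV u - numZeroEdges tail head n w x u := by
  simp only [negTwist, if_neg hux, add_zero, numZeroEdges]

theorem numZeroEdges_negTwist (w : AdmMD V E n) {x y u : V} (hxy : x ≠ y) (hxu : x ≠ u) :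
    numZeroEdges tail head n (negTwist tail head n w x) y u = numZeroEdges tail head n w y u := by
  unfold numZeroEdges
  congr 1
  refine Finset.filter_congr fun e _ => ?_
  refine ⟨fun ⟨hs, hm, ho⟩ => ⟨hs, ?_, ho⟩, fun ⟨hs, hm, ho⟩ => ⟨hs, ?_, ho⟩⟩ <;>
  · have hsx : sigma tail head e x = 0 := by
      rcases joins_of_otherEnd_eq hs ho with ⟨ht, hh⟩ | ⟨ht, hh⟩
      · exact sigma_eq_zero_of_ne (ht ▸ hxy.symm) (hh ▸ hxu.symm)
      · exact sigma_eq_zero_of_ne (ht ▸ hxu.symm) (hh ▸ hxy.symm)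
    simpa [negTwist, hsx] using hm

theorem foldl_negTwist_wV {l : List V} (hl : l.Nodup) {u : V} (hu : u ∉ l) (w : AdmMD V E n) :
    (l.foldl (negTwist tail head n) w).wV u
      = w.wV u - (l.map fun x => (numZeroEdges tail head n w x u : ℤ)).sum := by
  induction l generalizing w with
  | nil => simp
  | cons x t ih =>
    rw [List.nodup_cons] at hl
    rw [List.mem_cons, not_or] at hu
    have hrest : ∀ y ∈ t, numZeroEdges tail head n (negTwist tail head n w x) y u
        = numZeroEdges tail head n w y u := fun y hy =>
      numZeroEdges_negTwist w (by rintro rfl; exact hl.1 hy) (Ne.symm hu.1)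
    rw [List.foldl_cons, ih hl.2 hu.2, negTwist_wV_of_ne w hu.1, List.map_cons, List.sum_cons,
      List.map_congr_left fun y hy => by rw [hrest y hy]]
    ring

variable (tail head n) in
def IsConcentratingOrder (w : AdmMD V E n) (l : List V) : Prop :=
  ∀ (i : ℕ) (h : i < l.length), 0 < i →
    w.wV l[i] < ((l.take i).map fun x => (numZeroEdges tail head n w x l[i] : ℤ)).sum

theorem concentrated_iff {w : AdmMD V E n} {v : V} :
    Concentrated tail head n w v ↔ ∃ l : List V, l.Nodup ∧ (∀ x, x ∈ l) ∧ l.head? = some v ∧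
      IsConcentratingOrder tail head n w l := by
  refine exists_congr fun l => and_congr_right fun hl => and_congr_right fun _ =>
    and_congr_right fun _ => forall₂_congr fun i hi => imp_congr_right fun _ => ?_
  have hi_take : l[i] ∉ l.take i := by
    intro h
    obtain ⟨k, hk, hki⟩ := List.mem_take_iff_getElem.1 h
    have := (hl.getElem_inj_iff).1 hki
    omega
  rw [List.get_eq_getElem, foldl_negTwist_wV (hl.sublist (List.take_sublist i l)) hi_take,
    sub_neg]

theorem IsConcentratingOrder.exists_adj_idxOf_lt (hloop : Loopless tail head)
    {w : AdmMD V E n} {l : List V} (hl : IsConcentratingOrder tail head n w l) (hnd : l.Nodup)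
    {v : V} (hhead : l.head? = some v) (hnn : ∀ y, y ≠ v → 0 ≤ w.wV y) {y : V} (hy : y ∈ l)
    (hyv : y ≠ v) : ∃ z, (barGraph tail head).Adj y z ∧ l.idxOf z < l.idxOf y := by
  set j := l.idxOf y
  have hj : j < l.length := List.idxOf_lt_length_iff.2 hy
  have hlj : l[j] = y := List.getElem_idxOf hj
  have hj0 : 0 < j := by
    obtain ⟨t, rfl⟩ := List.head?_eq_some_iff.1 hhead
    simp [j, List.idxOf_cons_ne _ (Ne.symm hyv)]
  have hsum := (hnn y hyv).trans_lt (hlj ▸ hl j hj hj0)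
  obtain ⟨x, hx, hxy⟩ := List.exists_lt_of_sum_lt (fun _ => (0 : ℤ)) _
    (by simpa only [List.map_const', List.sum_replicate, smul_zero] using hsum)
  obtain ⟨k, hk, rfl⟩ := List.mem_take_iff_getElem.1 hx
  refine ⟨l[k], (barGraph_adj_of_numZeroEdges_pos hloop (by exact_mod_cast hxy)).symm, ?_⟩
  rw [hnd.idxOf_getElem]
  omega

variable {U : Finset V}

theorem IsConcentratingOrder.numZeroEdges_eq_zero_of_notMem (hloop : Loopless tail head)
    (hG : (barGraph tail head).IsAcyclic) {w : AdmMD V E n} {l : List V}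
    (hl : IsConcentratingOrder tail head n w l) (hnd : l.Nodup) (hall : ∀ x, x ∈ l) {v : V}
    (hhead : l.head? = some v) (hnn : ∀ y, y ≠ v → 0 ≤ w.wV y)
    (hU : ∀ u ∈ U, ∃ p : (barGraph tail head).Walk u v, ∀ z ∈ p.support, z ∈ U)
    {j : ℕ} (hj : j < l.length) (hjU : l[j] ∈ U) {x : V} (hx : x ∈ l.take j) (hxU : x ∉ U) :
    numZeroEdges tail head n w x l[j] = 0 := by
  by_contra hne
  refine hG.not_adj_of_lt (r := l.idxOf) (U := U)
    (fun y hyv => IsConcentratingOrder.exists_adj_idxOf_lt hloop hl hnd hhead hnn (hall y) hyv)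
    hU hxU hjU ?_ (barGraph_adj_of_numZeroEdges_pos hloop (Nat.pos_of_ne_zero hne))
  obtain ⟨k, hk, rfl⟩ := List.mem_take_iff_getElem.1 hx
  rw [hnd.idxOf_getElem, hnd.idxOf_getElem]
  omega

theorem numZeroEdges_restrict (w : AdmMD V E n) (x u : U) :
    numZeroEdges (inducedTail tail head U) (inducedHead tail head U) (fun e => n e.1)
      (w.restrict tail head U) x u = numZeroEdges tail head n w x u := by
  unfold numZeroEdges
  refine Finset.card_bij (fun e _ => e.1) ?_ (fun _ _ _ _ => Subtype.ext) ?_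
  · intro e he
    simp only [Finset.mem_filter, Finset.mem_univ, true_and, sigma_induced, Subtype.ext_iff,
      otherEnd_induced] at he ⊢
    exact he
  · intro e he
    simp only [Finset.mem_filter, Finset.mem_univ, true_and] at he
    obtain ⟨hs, hm, ho⟩ := he
    have hU : tail e ∈ U ∧ head e ∈ U := by
      rcases joins_of_otherEnd_eq hs ho with ⟨ht, hh⟩ | ⟨ht, hh⟩
      · exact ⟨ht ▸ x.2, hh ▸ u.2⟩
      · exact ⟨ht ▸ u.2, hh ▸ x.2⟩
    refine ⟨⟨e, hU⟩, ?_, rfl⟩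
    simp only [Finset.mem_filter, Finset.mem_univ, true_and, sigma_induced, Subtype.ext_iff,
      otherEnd_induced]
    exact ⟨hs, hm, ho⟩

theorem IsConcentratingOrder.restrict {w : AdmMD V E n} {l : List V}
    (hl : IsConcentratingOrder tail head n w l)
    (hout : ∀ (j : ℕ) (hj : j < l.length), l[j] ∈ U → ∀ x ∈ l.take j, x ∉ U →
      numZeroEdges tail head n w x l[j] = 0)
    {l' : List U} (hl' : l'.map Subtype.val = l.filter (· ∈ U)) :
    IsConcentratingOrder (inducedTail tail head U) (inducedHead tail head U) (fun e => n e.1)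
      (w.restrict tail head U) l' := by
  intro i hi hi0
  have hif : i < (l.filter (· ∈ U)).length := by rw [← hl', List.length_map]; exact hi
  obtain ⟨j, hj, hget, htake⟩ := List.exists_getElem_eq_and_take_filter _ l hif
  have hlj : l[j] = l'[i].1 := by simp [hget, ← hl']
  have hj0 : 0 < j := by
    refine Nat.pos_of_ne_zero fun h0 => ?_
    have := congrArg List.length htake
    rw [List.length_take, h0, List.take_zero, List.filter_nil, List.length_nil] at this
    omega
  calc (w.restrict tail head U).wV l'[i] = w.wV l[j] := by rw [hlj]; rfl
    _ < ((l.take j).map fun x => (numZeroEdges tail head n w x l[j] : ℤ)).sum := hl j hj hj0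
    _ = (((l.take j).filter (· ∈ U)).map fun x => (numZeroEdges tail head n w x l[j] : ℤ)).sum :=
      (List.sum_map_filter_of_eq_zero _ _ _ fun x hx hxU => by
        simp [hout j hj (hlj ▸ l'[i].2) x hx (by simpa using hxU)]).symm
    _ = _ := by
      rw [← htake, ← hl', ← List.map_take, List.map_map, hlj]
      simp only [Function.comp_def, numZeroEdges_restrict]

end Multidegree

theorem statement_11_general {V E : Type*} [Fintype E] [DecidableEq V]
    (tail head : E → V) (n : E → ℕ)
    (hloop : Loopless tail head)
    (htree : (barGraph tail head).IsTree)
    (w : AdmMD V E n) (v : V)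
    (hconc : Concentrated tail head n w v)
    (hnn : ∀ v' : V, v' ≠ v → 0 ≤ w.wV v')
    (U : Finset V) (hvU : v ∈ U)
    (hUconn : MGConnected
      (fun e : {e : E // tail e ∈ U ∧ head e ∈ U} => (⟨tail e.1, e.2.1⟩ : {x // x ∈ U}))
      (fun e : {e : E // tail e ∈ U ∧ head e ∈ U} =>
        (⟨head e.1, e.2.2⟩ : {x // x ∈ U}))) :
    Concentrated
      (fun e : {e : E // tail e ∈ U ∧ head e ∈ U} => (⟨tail e.1, e.2.1⟩ : {x // x ∈ U}))
      (fun e : {e : E // tail e ∈ U ∧ head e ∈ U} => (⟨head e.1, e.2.2⟩ : {x // x ∈ U}))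
      (fun e : {e : E // tail e ∈ U ∧ head e ∈ U} => n e.1)
      ⟨fun u => w.wV u.1, fun e => w.mu e.1⟩
      ⟨v, hvU⟩ := by
  rw [concentrated_iff] at hconc ⊢
  obtain ⟨l, hnd, hall, hhead, hl⟩ := hconc
  obtain ⟨l', hl', hnd', hall', hhead'⟩ := hnd.exists_subtype_map_val_eq_filter hall hhead hvU
  have hU (u) (hu : u ∈ U) := exists_walk_of_mgConnected_induced hloop hUconn ⟨u, hu⟩ ⟨v, hvU⟩
  refine ⟨l', hnd', hall', hhead', IsConcentratingOrder.restrict hl ?_ hl'⟩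
  exact fun j hj hjU x hx hxU => IsConcentratingOrder.numZeroEdges_eq_zero_of_notMem hloop
    htree.isAcyclic hl hnd hall hhead hnn hU hj hjU hx hxU

/-- on a multitree, an admissible multidegree concentrated at `v` and
nonnegative away from `v` remains concentrated at `v` upon restriction to any connected
induced subgraph containing `v`. -/
theorem statement_11 {V E : Type*} [Fintype V] [Fintype E] [DecidableEq V] [DecidableEq E]
    (tail head : E → V) (n : E → ℕ)
    (hloop : Loopless tail head) (hconn : MGConnected tail head)
    (htree : (barGraph tail head).IsTree)
    (hn : ∀ e, 0 < n e)
    (w : AdmMD V E n) (v : V)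
    (hconc : Concentrated tail head n w v)
    (hnn : ∀ v' : V, v' ≠ v → 0 ≤ w.wV v')
    (U : Finset V) (hvU : v ∈ U)
    (hUconn : MGConnected
      (fun e : {e : E // tail e ∈ U ∧ head e ∈ U} => (⟨tail e.1, e.2.1⟩ : {x // x ∈ U}))
      (fun e : {e : E // tail e ∈ U ∧ head e ∈ U} =>
        (⟨head e.1, e.2.2⟩ : {x // x ∈ U}))) :
    Concentrated
      (fun e : {e : E // tail e ∈ U ∧ head e ∈ U} => (⟨tail e.1, e.2.1⟩ : {x // x ∈ U}))
      (fun e : {e : E // tail e ∈ U ∧ head e ∈ U} => (⟨head e.1, e.2.2⟩ : {x // x ∈ U}))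
      (fun e : {e : E // tail e ∈ U ∧ head e ∈ U} => n e.1)
      ⟨fun u => w.wV u.1, fun e => w.mu e.1⟩
      ⟨v, hvU⟩ :=
  statement_11_general tail head n hloop htree w v hconc hnn U hvU hUconn

end LLS
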